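/- Let J(X) = (1/2)‖X − (1/L)·1‖² over X ∈ ℝ^L subject to Σ_l x_l = 1 and 0 ≤ x_l ≤ x̄_l for given bounds x̄_l > 0 with Σ_l x̄_l ≥ 1. Then the unique minimizer is given by x_l* = min(x̄_l, τ) where τ is chosen so that Σ_l min(x̄_l, τ) = 1. -/
import Mathlib


/-- Water-filling characterization of the unique minimizer of
`J(X) = (1/2)‖X − (1/L)·1‖²` over the simplex-with-box-constraints. -/
theorem stmt_0 (L : ℕ) (hL : 1 ≤ L) (xbar : Fin L → ℝ)
    (hpos : ∀ l, 0 < xbar l) (hsum : 1 ≤ ∑ l, xbar l)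
    (τ : ℝ) (hτ : 0 ≤ τ) (hτsum : ∑ l, min (xbar l) τ = 1) :
    ((∑ l, min (xbar l) τ = 1) ∧ ∀ l, 0 ≤ min (xbar l) τ ∧ min (xbar l) τ ≤ xbar l) ∧
    ∀ X : Fin L → ℝ, (∑ l, X l = 1) → (∀ l, 0 ≤ X l ∧ X l ≤ xbar l) →
      ((1/2) * ∑ l, (min (xbar l) τ - 1/(L:ℝ))^2 ≤ (1/2) * ∑ l, (X l - 1/(L:ℝ))^2) ∧
      ((1/2) * ∑ l, (min (xbar l) τ - 1/(L:ℝ))^2 = (1/2) * ∑ l, (X l - 1/(L:ℝ))^2 →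
        X = fun l => min (xbar l) τ) := by
  set c : ℝ := 1/(L:ℝ) with hc
  set y : Fin L → ℝ := fun l => min (xbar l) τ with hy
  have hfeas : ∀ l, 0 ≤ y l ∧ y l ≤ xbar l := fun l =>
    ⟨le_min (hpos l).le hτ, min_le_left _ _⟩
  refine ⟨⟨hτsum, hfeas⟩, ?_⟩
  intro X hX hXb
  have hterm : ∀ l ∈ Finset.univ, 0 ≤ (y l - τ) * (X l - y l) := by
    intro l _
    rcases le_total (xbar l) τ with h | h
    · have hyl : y l = xbar l := min_eq_left h
      have h1 : y l - τ ≤ 0 := by rw [hyl]; linarith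
      have h2 : X l - y l ≤ 0 := by rw [hyl]; linarith [(hXb l).2]
      exact mul_nonneg_of_nonpos_of_nonpos h1 h2
    · have hyl : y l = τ := min_eq_right h
      simp [hyl]
  have hsq : ∀ l ∈ Finset.univ, 0 ≤ (X l - y l)^2 := fun l _ => sq_nonneg _
  have hswap : ∑ l, (y l - c) * (X l - y l) = ∑ l, (y l - τ) * (X l - y l) := by
    have e1 : ∀ l, (y l - c) * (X l - y l) - (y l - τ) * (X l - y l)
        = (τ - c) * X l - (τ - c) * y l := by intro l; ring
    have e2 : ∑ l, ((y l - c) * (X l - y l) - (y l - τ) * (X l - y l)) = 0 := by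
      calc ∑ l, ((y l - c) * (X l - y l) - (y l - τ) * (X l - y l))
          = ∑ l, ((τ - c) * X l - (τ - c) * y l) := by
            exact Finset.sum_congr rfl fun l _ => e1 l
        _ = (τ - c) * (∑ l, X l) - (τ - c) * (∑ l, y l) := by
            rw [Finset.sum_sub_distrib, Finset.mul_sum, Finset.mul_sum]
        _ = 0 := by rw [hX, show (∑ l, y l) = 1 from hτsum]; ring
    rw [Finset.sum_sub_distrib] at e2
    linarith
  have main : ∑ l, (X l - c)^2
      = ∑ l, (y l - c)^2 + ∑ l, (X l - y l)^2 + 2 * ∑ l, (y l - τ) * (X l - y l) := by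
    have e1 : ∀ l, (X l - c)^2
        = (y l - c)^2 + (X l - y l)^2 + 2 * ((y l - c) * (X l - y l)) := by
      intro l; ring
    calc ∑ l, (X l - c)^2
        = ∑ l, ((y l - c)^2 + (X l - y l)^2 + 2 * ((y l - c) * (X l - y l))) :=
          Finset.sum_congr rfl fun l _ => e1 l
      _ = ∑ l, (y l - c)^2 + ∑ l, (X l - y l)^2 + 2 * ∑ l, (y l - c) * (X l - y l) := by
          rw [Finset.sum_add_distrib, Finset.sum_add_distrib, ← Finset.mul_sum]
      _ = _ := by rw [hswap]
  have h1 : 0 ≤ ∑ l, (y l - τ) * (X l - y l) := Finset.sum_nonneg hterm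
  have h2 : 0 ≤ ∑ l, (X l - y l)^2 := Finset.sum_nonneg hsq
  constructor
  · linarith
  · intro heq
    have hzero : ∑ l, (X l - y l)^2 = 0 := by linarith
    funext l
    have := (Finset.sum_eq_zero_iff_of_nonneg hsq).mp hzero l (Finset.mem_univ l)
    have : X l - y l = 0 := by
      have := sq_eq_zero_iff.mp this
      exact this
    have : X l = y l := by linarith
    simpa [hy] using this
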